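/- Let (g_n) be a sequence in SL(d,ℝ) such that σ_k(g_n)/σ_{k+1}(g_n) → ∞, U_k(g_n) → V_0 ∈ Gr_k(ℝ^d), and U_{d−k}(g_n⁻¹) → W_0 ∈ Gr_{d−k}(ℝ^d). Then for every V ∈ Gr_k(ℝ^d) transverse to W_0 (i.e. V ⊕ W_0 = ℝ^d) one has g_n · V → V_0, and the convergence is uniform on any compact subset of the open set of k-planes transverse to W_0. -/

import Mathlib

open Filter Metric Module Matrix

noncomputable def sval {d : ℕ} (g : Matrix (Fin d) (Fin d) ℝ) (i : ℕ) : ℝ :=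
  if h : 1 ≤ i ∧ i ≤ d then
    Real.sqrt ((Matrix.isHermitian_mul_conjTranspose_self g).eigenvalues
      (Tuple.sort (Matrix.isHermitian_mul_conjTranspose_self g).eigenvalues ⟨d - i, by omega⟩))
  else 0

noncomputable def Usp {d : ℕ} (g : Matrix (Fin d) (Fin d) ℝ) (k : ℕ) :
    Submodule ℝ (EuclideanSpace ℝ (Fin d)) :=
  ⨆ (μ : ℝ) (_ : (sval g k) ^ 2 ≤ μ),
    Module.End.eigenspace (Matrix.toEuclideanLin (g * gᴴ)) μ

noncomputable def projCLM {d : ℕ} (V : Submodule ℝ (EuclideanSpace ℝ (Fin d))) :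
    EuclideanSpace ℝ (Fin d) →L[ℝ] EuclideanSpace ℝ (Fin d) :=
  V.subtypeL.comp V.orthogonalProjection

noncomputable def grDist {d : ℕ} (V W : Submodule ℝ (EuclideanSpace ℝ (Fin d))) : ℝ :=
  ‖projCLM V - projCLM W‖

noncomputable def matNorm {d : ℕ} (g : Matrix (Fin d) (Fin d) ℝ) : ℝ :=
  ‖(Matrix.toEuclideanCLM (𝕜 := ℝ) g)‖

/-!
Write `σ = sval g k`, `σ' = sval g (k + 1)` and let `R` be the span of the right singular vectors
of `g` with singular value at least `σ`. Because `g * g⁻¹ = 1`, the space `U_{d-k}(g⁻¹)` is spanned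
by the other right singular vectors (a dimension count, once `U_k(g)` and `U_{d-k}(g⁻¹)` have the
dimensions of `V₀` and `W₀`), so it is `Rᗮ`. Now `g` maps `R` into `U_k(g)` stretching by at least
`σ`, and stretches `Rᗮ` by at most `σ'`. By compactness, every `v` in a plane `V` of the given
compact family has a component of norm `≥ c ‖v‖` in `R`, for one `c > 0`; hence `g v` is within
relative distance `O(σ' / (c σ))` of `U_k(g)`. As `g V` and `U_k(g)` have the same dimension, this
bounds the distance of the orthogonal projections, and `U_k(g) → V₀` finishes the proof.
-/

open Submodule
open scoped RealInnerProductSpace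

theorem Set.setOf_le_eq_compl_of_ncard_add_ncard_eq {ι α : Type*} [Finite ι] [LinearOrder α]
    (e : ι → α) {p q : α}
    (h : {i | p ≤ e i}.ncard + {i | e i ≤ q}.ncard = Nat.card ι) :
    {i | e i ≤ q} = {i | p ≤ e i}ᶜ := by
  set A := {i | p ≤ e i}
  set B := {i | e i ≤ q}
  have hdisj : Disjoint A B := by
    rw [Set.disjoint_iff_inter_eq_empty]
    by_contra hne
    obtain ⟨i, hiA, hiB⟩ := Set.nonempty_iff_ne_empty.2 hne
    -- `p ≤ e i ≤ q`, so every index lies in `A` or in `B`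
    have hcover : A ∪ B = Set.univ := Set.eq_univ_of_forall fun j =>
      (le_or_gt p (e j)).imp id fun hj => (hj.trans_le hiA).le.trans hiB
    have hcard := Set.ncard_union_add_ncard_inter A B
    rw [hcover, Set.ncard_univ, h, Nat.add_eq_left, Set.ncard_eq_zero] at hcard
    exact hne hcard
  refine Set.eq_of_subset_of_ncard_le hdisj.symm.subset_compl_right ?_
  have := Set.ncard_add_ncard_compl A
  omega

namespace OrthonormalBasis

variable {ι E : Type*} [Fintype ι] [NormedAddCommGroup E] [InnerProductSpace ℝ E]
  (b : OrthonormalBasis ι ℝ E)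

theorem mem_span_image_iff {s : Set ι} {x : E} :
    x ∈ span ℝ (b '' s) ↔ ∀ i ∉ s, ⟪b i, x⟫ = 0 := by
  constructor
  · intro hx i hi
    have hle : span ℝ (b '' s) ≤ (ℝ ∙ b i)ᗮ := by
      rw [span_le]
      rintro _ ⟨j, hj, rfl⟩
      exact mem_orthogonal_singleton_iff_inner_right.2 (b.orthonormal.2 fun hij => hi (hij ▸ hj))
    exact mem_orthogonal_singleton_iff_inner_right.1 (hle hx)
  · intro hx
    rw [← b.sum_repr' x]
    refine sum_mem fun i _ => ?_
    by_cases hi : i ∈ s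
    · exact smul_mem _ _ (subset_span ⟨i, hi, rfl⟩)
    · simp [hx i hi]

theorem orthogonal_span_image (s : Set ι) : (span ℝ (b '' s))ᗮ = span ℝ (b '' sᶜ) := by
  refine le_antisymm (fun x hx => b.mem_span_image_iff.2 fun i hi => ?_) ?_
  · exact inner_right_of_mem_orthogonal (subset_span (Set.mem_image_of_mem b (not_not.1 hi))) hx
  · refine (isOrtho_span.2 ?_).ge
    rintro _ ⟨i, hi, rfl⟩ _ ⟨j, hj, rfl⟩
    exact b.orthonormal.2 fun hij => hj (hij ▸ hi)

theorem finrank_span_image (s : Set ι) : finrank ℝ (span ℝ (b '' s)) = s.ncard := by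
  classical
  have := finrank_span_eq_card
    (b.orthonormal.linearIndependent.comp (Subtype.val : s → ι) Subtype.val_injective)
  rwa [Set.range_comp, Subtype.range_coe, ← Nat.card_eq_fintype_card, Nat.card_coe_set_eq]
    at this

variable {T : E →ₗ[ℝ] E} {ν : ι → ℝ}

theorem iSup_eigenspace_eq_span (hT : T.IsSymmetric) (hb : ∀ i, T (b i) = ν i • b i)
    (p : ℝ → Prop) :
    ⨆ (μ) (_ : p μ), End.eigenspace T μ = span ℝ (b '' {i | p (ν i)}) := by
  refine le_antisymm (iSup₂_le fun μ hμ x hx => b.mem_span_image_iff.2 fun i hi => ?_)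
    (span_le.2 ?_)
  · have hne : ν i ≠ μ := fun h => hi (by rwa [Set.mem_ofPred_eq, h])
    exact (hT.orthogonalFamily_eigenspaces.isOrtho hne).inner_eq
      (End.mem_eigenspace_iff.2 (hb i)) hx
  · rintro _ ⟨i, hi, rfl⟩
    exact mem_iSup_of_mem (ν i) (mem_iSup_of_mem hi (End.mem_eigenspace_iff.2 (hb i)))

theorem inner_map_self_eq_sum (hb : ∀ i, T (b i) = ν i • b i) (x : E) :
    ⟪T x, x⟫ = ∑ i, ν i * ⟪b i, x⟫ ^ 2 := by
  nth_rewrite 1 [← b.sum_repr' x]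
  simp only [map_sum, map_smul, hb, smul_smul, sum_inner, real_inner_smul_left]
  exact Finset.sum_congr rfl fun i _ => by ring

theorem inner_map_self_le (hb : ∀ i, T (b i) = ν i • b i) {s : Set ι} {x : E}
    (hx : x ∈ span ℝ (b '' s)) {τ : ℝ} (hτ : ∀ i ∈ s, ν i ≤ τ) :
    ⟪T x, x⟫ ≤ τ * ‖x‖ ^ 2 := by
  rw [b.inner_map_self_eq_sum hb, ← b.sum_sq_inner_right, Finset.mul_sum]
  refine Finset.sum_le_sum fun i _ => ?_
  by_cases hi : i ∈ s
  · exact mul_le_mul_of_nonneg_right (hτ i hi) (sq_nonneg _)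
  · simp [b.mem_span_image_iff.1 hx i hi]

theorem le_inner_map_self (hb : ∀ i, T (b i) = ν i • b i) {s : Set ι} {x : E}
    (hx : x ∈ span ℝ (b '' s)) {τ : ℝ} (hτ : ∀ i ∈ s, τ ≤ ν i) :
    τ * ‖x‖ ^ 2 ≤ ⟪T x, x⟫ := by
  rw [b.inner_map_self_eq_sum hb, ← b.sum_sq_inner_right, Finset.mul_sum]
  refine Finset.sum_le_sum fun i _ => ?_
  by_cases hi : i ∈ s
  · exact mul_le_mul_of_nonneg_right (hτ i hi) (sq_nonneg _)
  · simp [b.mem_span_image_iff.1 hx i hi]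

end OrthonormalBasis

section Projection

variable {E : Type*} [NormedAddCommGroup E] [InnerProductSpace ℝ E] [FiniteDimensional ℝ E]

namespace Submodule

theorem norm_sub_starProjection_le (V : Submodule ℝ E) (x : E) {y : E} (hy : y ∈ V) :
    ‖x - V.starProjection x‖ ≤ ‖x - y‖ := by
  rw [starProjection_minimal]
  exact ciInf_le ⟨0, Set.forall_mem_range.2 fun _ => norm_nonneg _⟩ (⟨y, hy⟩ : V)

theorem one_le_norm_starProjection_sub_of_finrank_lt {V W : Submodule ℝ E}
    (h : finrank ℝ W < finrank ℝ V) : 1 ≤ ‖V.starProjection - W.starProjection‖ := by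
  have hinf : V ⊓ Wᗮ ≠ ⊥ := by
    intro hbot
    have := finrank_sup_add_finrank_inf_eq V Wᗮ
    rw [hbot, finrank_bot] at this
    have := W.finrank_add_finrank_orthogonal
    have := (V ⊔ Wᗮ).finrank_le
    omega
  obtain ⟨x, ⟨hxV, hxW⟩, hx0⟩ := exists_mem_ne_zero_of_ne_bot hinf
  have hx : (V.starProjection - W.starProjection) x = x := by
    rw [_root_.sub_apply, starProjection_eq_self_iff.2 hxV,
      (starProjection_apply_eq_zero_iff W).2 hxW, sub_zero]
  have := (V.starProjection - W.starProjection).le_opNorm x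
  rw [hx] at this
  exact le_of_mul_le_mul_right (by linarith) (norm_pos_iff.2 hx0)

theorem finrank_eq_of_norm_starProjection_sub_lt_one {V W : Submodule ℝ E}
    (h : ‖V.starProjection - W.starProjection‖ < 1) : finrank ℝ V = finrank ℝ W := by
  by_contra hne
  rcases lt_or_gt_of_ne hne with hlt | hlt
  · rw [norm_sub_rev] at h
    exact (one_le_norm_starProjection_sub_of_finrank_lt hlt).not_gt h
  · exact (one_le_norm_starProjection_sub_of_finrank_lt hlt).not_gt h

section Close

variable {A B : Submodule ℝ E} {η : ℝ}

theorem exists_mem_starProjection_eq (hd : finrank ℝ A = finrank ℝ B) (hη : η < 1)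
    (h : ∀ a ∈ A, ‖a - B.starProjection a‖ ≤ η * ‖a‖) {b : E} (hb : b ∈ B) :
    ∃ a ∈ A, B.starProjection a = b := by
  let f : A →ₗ[ℝ] B := (B.orthogonalProjectionOnto : E →ₗ[ℝ] B) ∘ₗ A.subtype
  have hinj : Function.Injective f := by
    rw [← LinearMap.ker_eq_bot, LinearMap.ker_eq_bot']
    intro a ha
    have hPa : B.starProjection a = 0 := by
      rw [starProjection_apply]
      exact congrArg Subtype.val ha
    have := h a a.2
    rw [hPa, sub_zero] at this
    exact Subtype.ext (norm_le_zero_iff.1 (by nlinarith [norm_nonneg (a : E)]))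
  obtain ⟨a, ha⟩ := (LinearMap.injective_iff_surjective_of_finrank_eq_finrank hd).1 hinj ⟨b, hb⟩
  exact ⟨a, a.2, by rw [starProjection_apply]; exact congrArg Subtype.val ha⟩

theorem norm_sub_starProjection_le_two_mul (hd : finrank ℝ A = finrank ℝ B) (hη0 : 0 ≤ η)
    (hη : η ≤ 1 / 2) (h : ∀ a ∈ A, ‖a - B.starProjection a‖ ≤ η * ‖a‖) {b : E} (hb : b ∈ B) :
    ‖b - A.starProjection b‖ ≤ 2 * η * ‖b‖ := by
  obtain ⟨a, ha, rfl⟩ := exists_mem_starProjection_eq hd (by linarith) h hb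
  have hab := h a ha
  have ha2 : ‖a‖ ≤ 2 * ‖B.starProjection a‖ := by
    have := norm_le_norm_add_norm_sub' a (B.starProjection a)
    nlinarith [norm_nonneg a]
  calc ‖B.starProjection a - A.starProjection (B.starProjection a)‖
      ≤ ‖B.starProjection a - a‖ := A.norm_sub_starProjection_le _ ha
    _ = ‖a - B.starProjection a‖ := norm_sub_rev _ _
    _ ≤ 2 * η * ‖B.starProjection a‖ := by nlinarith

theorem norm_starProjection_sub_le (hd : finrank ℝ A = finrank ℝ B) (hη0 : 0 ≤ η)
    (hη : η ≤ 1 / 2) (h : ∀ a ∈ A, ‖a - B.starProjection a‖ ≤ η * ‖a‖) :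
    ‖A.starProjection - B.starProjection‖ ≤ 3 * η := by
  set P := A.starProjection
  set Q := B.starProjection
  have hAB : ‖(1 - Q) * P‖ ≤ η := by
    refine ContinuousLinearMap.opNorm_le_bound _ hη0 fun x => ?_
    calc ‖P x - Q (P x)‖ ≤ η * ‖P x‖ := h _ (starProjection_apply_mem A x)
      _ ≤ η * ‖x‖ := mul_le_mul_of_nonneg_left (A.norm_starProjection_apply_le x) hη0
  have hBA : ‖(1 - P) * Q‖ ≤ 2 * η := by
    refine ContinuousLinearMap.opNorm_le_bound _ (by positivity) fun x => ?_
    calc ‖Q x - P (Q x)‖ ≤ 2 * η * ‖Q x‖ :=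
          norm_sub_starProjection_le_two_mul hd hη0 hη h (starProjection_apply_mem B x)
      _ ≤ 2 * η * ‖x‖ :=
          mul_le_mul_of_nonneg_left (B.norm_starProjection_apply_le x) (by positivity)
  -- `Q * (1 - P)` is the adjoint of `(1 - P) * Q`, so it has the same norm
  have hstar : star (Q * (1 - P)) = (1 - P) * Q := by
    rw [star_mul, star_sub, star_one, (isSelfAdjoint_starProjection A).star_eq,
      (isSelfAdjoint_starProjection B).star_eq]
  calc ‖P - Q‖ = ‖(1 - Q) * P - Q * (1 - P)‖ := by noncomm_ring
    _ ≤ ‖(1 - Q) * P‖ + ‖Q * (1 - P)‖ := norm_sub_le _ _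
    _ = ‖(1 - Q) * P‖ + ‖(1 - P) * Q‖ := by rw [← hstar]; exact congrArg _ (norm_star _).symm
    _ ≤ 3 * η := by linarith

end Close

theorem sub_mul_norm_le_norm_sub_starProjection {W W₀ : Submodule ℝ E} {c δ : ℝ}
    (hδ : ‖W.starProjection - W₀.starProjection‖ ≤ δ) {v : E}
    (hv : c * ‖v‖ ≤ ‖v - W₀.starProjection v‖) :
    (c - δ) * ‖v‖ ≤ ‖v - W.starProjection v‖ := by
  have hdiff : ‖(W.starProjection - W₀.starProjection) v‖ ≤ δ * ‖v‖ :=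
    ((W.starProjection - W₀.starProjection).le_opNorm v).trans
      (mul_le_mul_of_nonneg_right hδ (norm_nonneg v))
  rw [_root_.sub_apply] at hdiff
  have hsplit : v - W₀.starProjection v
      = (v - W.starProjection v) + (W.starProjection v - W₀.starProjection v) := by abel
  have := norm_add_le (v - W.starProjection v) (W.starProjection v - W₀.starProjection v)
  rw [← hsplit] at this
  linarith

end Submodule

theorem exists_pos_mul_norm_le_norm_sub_starProjection {W : Submodule ℝ E}
    {S : Set (Submodule ℝ E)} (hS : ∀ V ∈ S, Disjoint V W)
    (hK : IsCompact ((fun V : Submodule ℝ E => V.starProjection) '' S)) :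
    ∃ c > 0, ∀ V ∈ S, ∀ v ∈ V, c * ‖v‖ ≤ ‖v - W.starProjection v‖ := by
  -- `F (P_V, x)` is `‖x - P_W x‖` for unit vectors `x ∈ V`, and it is positive on the whole
  -- compact set of pairs `(P_V, x)` with `V ∈ S` and `‖x‖ = 1`
  let F : (E →L[ℝ] E) × E → ℝ := fun p =>
    ‖p.1 p.2 - W.starProjection (p.1 p.2)‖ + ‖p.2 - p.1 p.2‖
  have hF : Continuous F := by fun_prop
  have hpos : ∀ p ∈ ((fun V : Submodule ℝ E => V.starProjection) '' S) ×ˢ Metric.sphere 0 1,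
      0 < F p := by
    rintro ⟨_, x⟩ ⟨⟨V, hV, rfl⟩, hx⟩
    by_contra hle
    have hxV : V.starProjection x = x := by
      rw [eq_comm, ← sub_eq_zero, ← norm_le_zero_iff]
      linarith [not_lt.1 hle,
        norm_nonneg (V.starProjection x - W.starProjection (V.starProjection x))]
    have hxW : W.starProjection x = x := by
      rw [eq_comm, ← sub_eq_zero, ← norm_le_zero_iff]
      simpa [F, hxV] using not_lt.1 hle
    have hx0 := Submodule.disjoint_def.1 (hS V hV) x (starProjection_eq_self_iff.1 hxV)
      (starProjection_eq_self_iff.1 hxW)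
    simp [hx0] at hx
  obtain ⟨c, hc, hcF⟩ := (hK.prod (isCompact_sphere 0 1)).exists_forall_le' hF.continuousOn hpos
  refine ⟨c, hc, fun V hV v hv => ?_⟩
  rcases eq_or_ne v 0 with rfl | hv0
  · simp
  have hu := hcF (V.starProjection, ‖v‖⁻¹ • v)
    ⟨⟨V, hV, rfl⟩, by simp [norm_smul, norm_ne_zero_iff.2 hv0]⟩
  simp only [F, starProjection_eq_self_iff.2 (V.smul_mem _ hv), sub_self, norm_zero, add_zero,
    map_smul, ← smul_sub, norm_smul, norm_inv, norm_norm] at hu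
  rwa [inv_mul_eq_div, le_div_iff₀ (norm_pos_iff.2 hv0)] at hu

end Projection

section MapEstimate

variable {E F : Type*} [NormedAddCommGroup E] [InnerProductSpace ℝ E] [FiniteDimensional ℝ E]
  [NormedAddCommGroup F] [InnerProductSpace ℝ F]
  (f : E →ₗ[ℝ] F) {W : Submodule ℝ E} {σ σ' : ℝ}

theorem sub_le_norm_map (hlow : ∀ r ∈ Wᗮ, σ * ‖r‖ ≤ ‖f r‖)
    (hup : ∀ w ∈ W, ‖f w‖ ≤ σ' * ‖w‖) (v : E) :
    σ * ‖v - W.starProjection v‖ - σ' * ‖W.starProjection v‖ ≤ ‖f v‖ := by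
  have hsplit : f (v - W.starProjection v) = f v - f (W.starProjection v) := map_sub _ _ _
  have := norm_sub_le (f v) (f (W.starProjection v))
  rw [← hsplit] at this
  linarith [hlow _ (W.sub_starProjection_mem_orthogonal v),
    hup _ (W.starProjection_apply_mem v)]

variable [FiniteDimensional ℝ F]

theorem norm_map_sub_starProjection_le {U : Submodule ℝ F} (hfU : ∀ r ∈ Wᗮ, f r ∈ U)
    (hup : ∀ w ∈ W, ‖f w‖ ≤ σ' * ‖w‖) (v : E) :
    ‖f v - U.starProjection (f v)‖ ≤ σ' * ‖W.starProjection v‖ :=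
  calc ‖f v - U.starProjection (f v)‖ ≤ ‖f v - f (v - W.starProjection v)‖ :=
        U.norm_sub_starProjection_le _ (hfU _ (W.sub_starProjection_mem_orthogonal v))
    _ = ‖f (W.starProjection v)‖ := by rw [map_sub, sub_sub_cancel]
    _ ≤ σ' * ‖W.starProjection v‖ := hup _ (W.starProjection_apply_mem v)

theorem norm_map_sub_starProjection_le_mul {U : Submodule ℝ F} (hfU : ∀ r ∈ Wᗮ, f r ∈ U)
    (hlow : ∀ r ∈ Wᗮ, σ * ‖r‖ ≤ ‖f r‖) (hup : ∀ w ∈ W, ‖f w‖ ≤ σ' * ‖w‖) (hσ : 0 ≤ σ)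
    (hσ' : 0 ≤ σ') {a η : ℝ} (hη : 0 ≤ η) (hgap : σ' ≤ η * (σ * a - σ')) {v : E}
    (hv : a * ‖v‖ ≤ ‖v - W.starProjection v‖) :
    ‖f v - U.starProjection (f v)‖ ≤ η * ‖f v‖ := by
  have hP := W.norm_starProjection_apply_le v
  have hdist := norm_map_sub_starProjection_le f hfU hup v
  have hlower := sub_le_norm_map f hlow hup v
  have h1 : σ' * ‖W.starProjection v‖ ≤ σ' * ‖v‖ := mul_le_mul_of_nonneg_left hP hσ'
  have h2 : (σ * a - σ') * ‖v‖ ≤ ‖f v‖ := by nlinarith [mul_le_mul_of_nonneg_left hv hσ]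
  calc ‖f v - U.starProjection (f v)‖ ≤ σ' * ‖v‖ := hdist.trans h1
    _ ≤ η * (σ * a - σ') * ‖v‖ := mul_le_mul_of_nonneg_right hgap (norm_nonneg v)
    _ ≤ η * ‖f v‖ := by rw [mul_assoc]; exact mul_le_mul_of_nonneg_left h2 hη

end MapEstimate

section SingularValues

theorem Matrix.IsHermitian.toEuclideanLin_eigenvectorBasis {n : Type*} [Fintype n]
    [DecidableEq n] {A : Matrix n n ℝ} (hA : A.IsHermitian) (i : n) :
    toEuclideanLin A (hA.eigenvectorBasis i) = hA.eigenvalues i • hA.eigenvectorBasis i := by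
  ext j
  simpa [toLpLin_apply] using congrFun (hA.mulVec_eigenvectorBasis i) j

theorem Matrix.eigenvalues_conjTranspose_mul_self_eq {n : Type*} [Fintype n] [DecidableEq n]
    (M : Matrix n n ℝ) :
    (isHermitian_conjTranspose_mul_self M).eigenvalues =
      (isHermitian_mul_conjTranspose_self M).eigenvalues :=
  (IsHermitian.eigenvalues_eq_eigenvalues_iff _ _).2 (charpoly_mul_comm _ _)

theorem Matrix.norm_toEuclideanLin_sq {n : Type*} [Fintype n] [DecidableEq n]
    (M : Matrix n n ℝ) (x : EuclideanSpace ℝ n) :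
    ‖toEuclideanLin M x‖ ^ 2 = ⟪toEuclideanLin (Mᴴ * M) x, x⟫ := by
  rw [toLpLin_mul_same, LinearMap.comp_apply, toEuclideanLin_conjTranspose_eq_adjoint,
    LinearMap.adjoint_inner_left, real_inner_self_eq_norm_sq]

variable {d : ℕ}

-- Unsorted, and indexed compatibly with `rightSingularBasis`, by
-- `eigenvalues_conjTranspose_mul_self_eq`.
noncomputable abbrev sqSingularValues (M : Matrix (Fin d) (Fin d) ℝ) : Fin d → ℝ :=
  (isHermitian_mul_conjTranspose_self M).eigenvalues

noncomputable abbrev rightSingularBasis (M : Matrix (Fin d) (Fin d) ℝ) :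
    OrthonormalBasis (Fin d) ℝ (EuclideanSpace ℝ (Fin d)) :=
  (isHermitian_conjTranspose_mul_self M).eigenvectorBasis

theorem sqSingularValues_pos {M : Matrix (Fin d) (Fin d) ℝ} (hM : IsUnit M) (i : Fin d) :
    0 < sqSingularValues M i :=
  (PosDef.mul_conjTranspose_self M (vecMul_injective_iff_isUnit.2 hM)).eigenvalues_pos i

theorem sq_sval (M : Matrix (Fin d) (Fin d) ℝ) {i : ℕ} (h1 : 1 ≤ i) (h2 : i ≤ d) :
    sval M i ^ 2 = sqSingularValues M (Tuple.sort (sqSingularValues M) ⟨d - i, by omega⟩) := by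
  rw [sval, dif_pos ⟨h1, h2⟩, Real.sq_sqrt (eigenvalues_self_mul_conjTranspose_nonneg M _)]

theorem sval_nonneg (M : Matrix (Fin d) (Fin d) ℝ) (i : ℕ) : 0 ≤ sval M i := by
  unfold sval
  split_ifs <;> positivity

theorem sval_pos {M : Matrix (Fin d) (Fin d) ℝ} (hM : IsUnit M) {i : ℕ} (h1 : 1 ≤ i)
    (h2 : i ≤ d) : 0 < sval M i := by
  rw [sval, dif_pos ⟨h1, h2⟩]
  exact Real.sqrt_pos.2 (sqSingularValues_pos hM _)

theorem sqSingularValues_le_sq_sval_succ (M : Matrix (Fin d) (Fin d) ℝ) {k : ℕ} (hk : 1 ≤ k)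
    (hkd : k < d) {j : Fin d} (hj : sqSingularValues M j < sval M k ^ 2) :
    sqSingularValues M j ≤ sval M (k + 1) ^ 2 := by
  have hmono := Tuple.monotone_sort (sqSingularValues M)
  rw [sq_sval M hk hkd.le] at hj
  rw [sq_sval M (by omega) hkd]
  obtain ⟨p, rfl⟩ := (Tuple.sort (sqSingularValues M)).surjective j
  have hp : p < ⟨d - k, by omega⟩ := lt_of_not_ge fun h => hj.not_ge (hmono h)
  exact hmono (Fin.le_def.2 (by rw [Fin.lt_def] at hp; dsimp only at hp ⊢; omega))

theorem toEuclideanLin_rightSingularBasis (M : Matrix (Fin d) (Fin d) ℝ) (i : Fin d) :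
    toEuclideanLin (Mᴴ * M) (rightSingularBasis M i) =
      sqSingularValues M i • rightSingularBasis M i := by
  rw [sqSingularValues, ← eigenvalues_conjTranspose_mul_self_eq]
  exact IsHermitian.toEuclideanLin_eigenvectorBasis _ i

theorem toEuclideanLin_rightSingularBasis_of_mul_eq_one {M M' : Matrix (Fin d) (Fin d) ℝ}
    (hMM' : M * M' = 1) (i : Fin d) :
    toEuclideanLin (M' * M'ᴴ) (rightSingularBasis M i) =
      (sqSingularValues M i)⁻¹ • rightSingularBasis M i := by
  have hinv : M' * M'ᴴ * (Mᴴ * M) = 1 := by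
    rw [Matrix.mul_assoc, ← Matrix.mul_assoc M'ᴴ, ← conjTranspose_mul, hMM', conjTranspose_one,
      Matrix.one_mul, mul_eq_one_comm.1 hMM']
  have h := congrArg (toEuclideanLin (M' * M'ᴴ)) (toEuclideanLin_rightSingularBasis M i)
  rw [← LinearMap.comp_apply, ← toLpLin_mul_same, hinv, toLpLin_one, LinearMap.id_apply,
    map_smul] at h
  have he := (sqSingularValues_pos (.of_mul_eq_one M' hMM') i).ne'
  conv_rhs => rw [h, smul_smul, inv_mul_cancel₀ he, one_smul]

end SingularValues

section SingularSubspaces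

variable {d : ℕ}

theorem Usp_eq_span (M : Matrix (Fin d) (Fin d) ℝ) (k : ℕ) :
    Usp M k = span ℝ ((isHermitian_mul_conjTranspose_self M).eigenvectorBasis ''
      {i | sval M k ^ 2 ≤ sqSingularValues M i}) :=
  OrthonormalBasis.iSup_eigenspace_eq_span _
    (isSymmetric_toEuclideanLin_iff.2 (isHermitian_mul_conjTranspose_self M))
    (IsHermitian.toEuclideanLin_eigenvectorBasis _) (fun μ => sval M k ^ 2 ≤ μ)

theorem Usp_eq_span_rightSingularBasis_of_mul_eq_one {M M' : Matrix (Fin d) (Fin d) ℝ}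
    (hMM' : M * M' = 1) (k : ℕ) :
    Usp M' k = span ℝ (rightSingularBasis M '' {i | sval M' k ^ 2 ≤ (sqSingularValues M i)⁻¹}) :=
  OrthonormalBasis.iSup_eigenspace_eq_span _
    (isSymmetric_toEuclideanLin_iff.2 (isHermitian_mul_conjTranspose_self M'))
    (toEuclideanLin_rightSingularBasis_of_mul_eq_one hMM') (fun μ => sval M' k ^ 2 ≤ μ)

theorem map_span_rightSingularBasis_le_Usp (M : Matrix (Fin d) (Fin d) ℝ) (k : ℕ) :
    (span ℝ (rightSingularBasis M '' {i | sval M k ^ 2 ≤ sqSingularValues M i})).map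
      (toEuclideanLin M) ≤ Usp M k := by
  rw [map_span, span_le]
  rintro _ ⟨_, ⟨i, hi, rfl⟩, rfl⟩
  have hi' : toEuclideanLin (M * Mᴴ) (toEuclideanLin M (rightSingularBasis M i)) =
      sqSingularValues M i • toEuclideanLin M (rightSingularBasis M i) := by
    rw [← LinearMap.comp_apply, ← toLpLin_mul_same, Matrix.mul_assoc, toLpLin_mul_same,
      LinearMap.comp_apply, toEuclideanLin_rightSingularBasis, map_smul]
  exact mem_iSup_of_mem _ (mem_iSup_of_mem hi (Module.End.mem_eigenspace_iff.2 hi'))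

theorem Usp_eq_span_rightSingularBasis_compl {M M' : Matrix (Fin d) (Fin d) ℝ}
    (hMM' : M * M' = 1) {k : ℕ} (hkd : k < d) (hU : finrank ℝ (Usp M k) = k)
    (hW : finrank ℝ (Usp M' (d - k)) = d - k) :
    Usp M' (d - k) =
      span ℝ (rightSingularBasis M '' {i | sval M k ^ 2 ≤ sqSingularValues M i}ᶜ) := by
  have hM : IsUnit M := .of_mul_eq_one M' hMM'
  have hM' : IsUnit M' := .of_mul_eq_one_right M hMM'
  have hB : {i | sval M' (d - k) ^ 2 ≤ (sqSingularValues M i)⁻¹} =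
      {i | sqSingularValues M i ≤ (sval M' (d - k) ^ 2)⁻¹} := by
    ext i
    exact le_inv_comm₀ (pow_pos (sval_pos hM' (by omega) (by omega)) 2)
      (sqSingularValues_pos hM i)
  rw [Usp_eq_span_rightSingularBasis_of_mul_eq_one hMM', hB] at hW ⊢
  rw [Set.setOf_le_eq_compl_of_ncard_add_ncard_eq]
  rw [← (isHermitian_mul_conjTranspose_self M).eigenvectorBasis.finrank_span_image,
    ← Usp_eq_span, hU, ← (rightSingularBasis M).finrank_span_image, hW, Nat.card_eq_fintype_card,
    Fintype.card_fin]
  omega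

theorem orthogonal_Usp_eq_span_rightSingularBasis {M M' : Matrix (Fin d) (Fin d) ℝ}
    (hMM' : M * M' = 1) {k : ℕ} (hkd : k < d) (hU : finrank ℝ (Usp M k) = k)
    (hW : finrank ℝ (Usp M' (d - k)) = d - k) :
    (Usp M' (d - k))ᗮ =
      span ℝ (rightSingularBasis M '' {i | sval M k ^ 2 ≤ sqSingularValues M i}) := by
  rw [Usp_eq_span_rightSingularBasis_compl hMM' hkd hU hW,
    OrthonormalBasis.orthogonal_span_image, compl_compl]

theorem mul_norm_le_norm_toEuclideanLin (M : Matrix (Fin d) (Fin d) ℝ) (k : ℕ)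
    {r : EuclideanSpace ℝ (Fin d)}
    (hr : r ∈ span ℝ (rightSingularBasis M '' {i | sval M k ^ 2 ≤ sqSingularValues M i})) :
    sval M k * ‖r‖ ≤ ‖toEuclideanLin M r‖ := by
  have h := (rightSingularBasis M).le_inner_map_self (toEuclideanLin_rightSingularBasis M) hr
    fun _ hi => hi
  rw [← norm_toEuclideanLin_sq, ← mul_pow] at h
  exact (pow_le_pow_iff_left₀ (mul_nonneg (sval_nonneg M k) (norm_nonneg r)) (norm_nonneg _)
    two_ne_zero).1 h

theorem norm_toEuclideanLin_le_mul (M : Matrix (Fin d) (Fin d) ℝ) {k : ℕ} (hk : 1 ≤ k)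
    (hkd : k < d) {w : EuclideanSpace ℝ (Fin d)}
    (hw : w ∈ span ℝ (rightSingularBasis M '' {i | sval M k ^ 2 ≤ sqSingularValues M i}ᶜ)) :
    ‖toEuclideanLin M w‖ ≤ sval M (k + 1) * ‖w‖ := by
  have h := (rightSingularBasis M).inner_map_self_le (toEuclideanLin_rightSingularBasis M) hw
    fun _ hi => sqSingularValues_le_sq_sval_succ M hk hkd (not_le.1 hi)
  rw [← norm_toEuclideanLin_sq, ← mul_pow] at h
  exact (pow_le_pow_iff_left₀ (norm_nonneg _)
    (mul_nonneg (sval_nonneg M (k + 1)) (norm_nonneg w)) two_ne_zero).1 h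

end SingularSubspaces

section GrassmannDistance

variable {d : ℕ}

theorem grDist_triangle (U V W : Submodule ℝ (EuclideanSpace ℝ (Fin d))) :
    grDist U W ≤ grDist U V + grDist V W :=
  norm_sub_le_norm_sub_add_norm_sub _ _ _

theorem finrank_eq_of_grDist_lt_one {V W : Submodule ℝ (EuclideanSpace ℝ (Fin d))}
    (h : grDist V W < 1) : finrank ℝ V = finrank ℝ W :=
  finrank_eq_of_norm_starProjection_sub_lt_one h

theorem grDist_map_Usp_le {M M' : Matrix (Fin d) (Fin d) ℝ} (hMM' : M * M' = 1) {k : ℕ}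
    (hk : 1 ≤ k) (hkd : k < d) (hU : finrank ℝ (Usp M k) = k)
    (hW : finrank ℝ (Usp M' (d - k)) = d - k) {V : Submodule ℝ (EuclideanSpace ℝ (Fin d))}
    (hV : finrank ℝ V = k) {a η : ℝ} (ha : 0 < a) (hη0 : 0 < η) (hη : η ≤ 1 / 2)
    (htrans : ∀ v ∈ V, a * ‖v‖ ≤ ‖v - (Usp M' (d - k)).starProjection v‖)
    (hgap : 2 / (η * a) ≤ sval M k / sval M (k + 1)) :
    grDist (V.map (toEuclideanLin M)) (Usp M k) ≤ 3 * η := by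
  have hinj : Function.Injective (toEuclideanLin M) := fun x y hxy => by
    simpa [← LinearMap.comp_apply, ← toLpLin_mul_same, mul_eq_one_comm.1 hMM'] using
      congrArg (toEuclideanLin M') hxy
  have hσ' : 0 < sval M (k + 1) := sval_pos (.of_mul_eq_one M' hMM') (by omega) hkd
  have hgap' : sval M (k + 1) ≤ η * (sval M k * a - sval M (k + 1)) := by
    rw [div_le_div_iff₀ (by positivity) hσ'] at hgap
    nlinarith [mul_le_mul_of_nonneg_right hη hσ'.le]
  have hR := orthogonal_Usp_eq_span_rightSingularBasis hMM' hkd hU hW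
  refine norm_starProjection_sub_le ?_ hη0.le hη ?_
  · rw [← (equivMapOfInjective _ hinj V).finrank_eq, hV, hU]
  rintro _ ⟨v, hv, rfl⟩
  refine norm_map_sub_starProjection_le_mul (toEuclideanLin M) (W := Usp M' (d - k)) ?_ ?_ ?_
    (sval_nonneg M k) hσ'.le hη0.le hgap' (htrans v hv)
  · intro r hr
    rw [hR] at hr
    exact map_span_rightSingularBasis_le_Usp M k ⟨r, hr, rfl⟩
  · intro r hr
    rw [hR] at hr
    exact mul_norm_le_norm_toEuclideanLin M k hr
  · intro w hw
    rw [Usp_eq_span_rightSingularBasis_compl hMM' hkd hU hW] at hw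
    exact norm_toEuclideanLin_le_mul M hk hkd hw

theorem eventually_forall_grDist_map_lt {d k : ℕ} (hk : 1 ≤ k) (hkd : k < d)
    {g g' : ℕ → Matrix (Fin d) (Fin d) ℝ} (hgg' : ∀ n, g n * g' n = 1)
    {V₀ W₀ : Submodule ℝ (EuclideanSpace ℝ (Fin d))} (hV₀ : finrank ℝ V₀ = k)
    (hW₀ : finrank ℝ W₀ = d - k)
    (hdiv : Tendsto (fun n => sval (g n) k / sval (g n) (k + 1)) atTop atTop)
    (hU : Tendsto (fun n => grDist (Usp (g n) k) V₀) atTop (nhds 0))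
    (hU' : Tendsto (fun n => grDist (Usp (g' n) (d - k)) W₀) atTop (nhds 0))
    {S : Set (Submodule ℝ (EuclideanSpace ℝ (Fin d)))}
    (hS : ∀ V ∈ S, finrank ℝ V = k ∧ Disjoint V W₀) (hK : IsCompact (projCLM '' S)) {ε : ℝ}
    (hε : 0 < ε) :
    ∀ᶠ n in atTop, ∀ V ∈ S, grDist (V.map (toEuclideanLin (g n))) V₀ < ε := by
  obtain ⟨c, hc, htrans⟩ :=
    exists_pos_mul_norm_le_norm_sub_starProjection (fun V hV => (hS V hV).2) hK
  set η := min (1 / 2) (ε / 6)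
  have hη0 : 0 < η := lt_min (by norm_num) (by positivity)
  filter_upwards [hdiv.eventually_ge_atTop (2 / (η * (c / 2))),
    hU.eventually_lt_const (lt_min one_pos (half_pos hε)),
    hU'.eventually_lt_const (lt_min one_pos (half_pos hc))] with n hgap hUn hWn V hV
  have hclose := grDist_map_Usp_le (hgg' n) hk hkd
    ((finrank_eq_of_grDist_lt_one (hUn.trans_le (min_le_left _ _))).trans hV₀)
    ((finrank_eq_of_grDist_lt_one (hWn.trans_le (min_le_left _ _))).trans hW₀) (hS V hV).1
    (half_pos hc) hη0 (min_le_left _ _) (fun v hv => by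
      simpa only [sub_half] using sub_mul_norm_le_norm_sub_starProjection
        (hWn.trans_le (min_le_right _ _)).le (htrans V hV v hv)) hgap
  calc _ ≤ _ := grDist_triangle _ (Usp (g n) k) _
    _ < 3 * η + ε / 2 := add_lt_add_of_le_of_lt hclose (hUn.trans_le (min_le_right _ _))
    _ ≤ ε := by linarith [min_le_right (1 / 2 : ℝ) (ε / 6)]

end GrassmannDistance

/-- strong dynamics-preserving convergence, uniform on compact sets
of transverse planes. -/
theorem tendsto_map_of_singular_gap (d k : ℕ) (hk : 1 ≤ k) (hkd : k < d)
    (g : ℕ → Matrix.SpecialLinearGroup (Fin d) ℝ)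
    (V₀ : Submodule ℝ (EuclideanSpace ℝ (Fin d))) (hV₀ : Module.finrank ℝ V₀ = k)
    (W₀ : Submodule ℝ (EuclideanSpace ℝ (Fin d))) (hW₀ : Module.finrank ℝ W₀ = d - k)
    (hdiv : Tendsto (fun n => sval (g n : Matrix (Fin d) (Fin d) ℝ) k /
      sval (g n : Matrix (Fin d) (Fin d) ℝ) (k + 1)) atTop atTop)
    (hU : Tendsto (fun n => grDist (Usp (g n : Matrix (Fin d) (Fin d) ℝ) k) V₀) atTop (nhds 0))
    (hU' : Tendsto (fun n => grDist (Usp ((g n)⁻¹ : Matrix (Fin d) (Fin d) ℝ) (d - k)) W₀)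
      atTop (nhds 0)) :
    (∀ V : Submodule ℝ (EuclideanSpace ℝ (Fin d)), Module.finrank ℝ V = k → IsCompl V W₀ →
      Tendsto (fun n =>
        grDist (Submodule.map (Matrix.toEuclideanLin (g n : Matrix (Fin d) (Fin d) ℝ)) V) V₀)
        atTop (nhds 0)) ∧
    (∀ S : Set (Submodule ℝ (EuclideanSpace ℝ (Fin d))),
      (∀ V ∈ S, Module.finrank ℝ V = k ∧ IsCompl V W₀) →
      IsCompact (projCLM '' S) →
      ∀ ε > (0 : ℝ), ∃ N : ℕ, ∀ n ≥ N, ∀ V ∈ S,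
        grDist (Submodule.map (Matrix.toEuclideanLin (g n : Matrix (Fin d) (Fin d) ℝ)) V) V₀ < ε) := by
  have hunif (S : Set (Submodule ℝ (EuclideanSpace ℝ (Fin d))))
      (hS : ∀ V ∈ S, finrank ℝ V = k ∧ IsCompl V W₀) (hK : IsCompact (projCLM '' S)) (ε : ℝ)
      (hε : 0 < ε) :=
    eventually_forall_grDist_map_lt hk hkd (g' := fun n => ((g n)⁻¹ : Matrix (Fin d) (Fin d) ℝ))
      (fun n => by simp) hV₀ hW₀ hdiv hU hU' (fun V hV => ⟨(hS V hV).1, (hS V hV).2.disjoint⟩)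
      hK hε
  refine ⟨fun V hV hVW => tendsto_order.2 ⟨fun a ha => .of_forall fun n => ha.trans_le
    (norm_nonneg _), fun ε hε => ?_⟩, fun S hS hK ε hε => eventually_atTop.1 (hunif S hS hK ε hε)⟩
  filter_upwards [hunif {V} (by simpa using ⟨hV, hVW⟩) (by simp) ε hε] with n hn
  exact hn V rfl
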